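/- arXiv:2403.02554 — 8 statements merged into one kernel-verified Lean document; each statement's English description precedes it below -/
import Mathlib

section
/- Let h = ⟨e2 + γ e4, e1⟩ be the two-dimensional subalgebra of gl_2(ℝ) (with [e1, e2] = e1 and e4 central, so [e2 + γe4, e1] = −e1). A linear map α: h → ℝ² with α(e2 + γe4) = 0 and α(e1) = c21 f1 + c22 f2 is a 1-cocycle with values in the gl_2(ℝ)-module ℝ² if and only if (γ + 3) c21 = 0 and (γ + 1) c22 = 0. In particular, for γ ∉ {−3, −1} the only such cocycle is trivial, while for γ = −3 there is a nontrivial cocycle with α(e1) = f1. -/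
open Matrix

private lemma cocycle_span_aux {a b : Matrix (Fin 2) (Fin 2) ℝ}
    (α : Matrix (Fin 2) (Fin 2) ℝ →ₗ[ℝ] (Fin 2 → ℝ))
    (hab : α (a * b - b * a) = a.mulVec (α b) - b.mulVec (α a)) :
    ∀ x ∈ Submodule.span ℝ ({a, b} : Set (Matrix (Fin 2) (Fin 2) ℝ)),
      ∀ y ∈ Submodule.span ℝ ({a, b} : Set (Matrix (Fin 2) (Fin 2) ℝ)),
        α (x * y - y * x) = x.mulVec (α y) - y.mulVec (α x) := by
  set P : Matrix (Fin 2) (Fin 2) ℝ → Matrix (Fin 2) (Fin 2) ℝ → Prop :=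
    fun x y => α (x * y - y * x) = x.mulVec (α y) - y.mulVec (α x) with hP
  have hsymm : ∀ x y, P x y → P y x := by
    intro x y h
    simp only [hP] at h ⊢
    have : y * x - x * y = -(x * y - y * x) := by noncomm_ring
    rw [this, map_neg, h]
    abel
  have hself : ∀ x, P x x := by
    intro x; simp only [hP, sub_self, map_zero]
  have haddR : ∀ x y z, P x y → P x z → P x (y + z) := by
    intro x y z h1 h2
    simp only [hP] at h1 h2 ⊢
    have : x * (y + z) - (y + z) * x = (x * y - y * x) + (x * z - z * x) := by noncomm_ring
    rw [this, map_add, h1, h2, map_add, mulVec_add, add_mulVec]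
    abel
  have hsmulR : ∀ (c : ℝ) x y, P x y → P x (c • y) := by
    intro c x y h
    simp only [hP] at h ⊢
    have : x * (c • y) - (c • y) * x = c • (x * y - y * x) := by
      rw [mul_smul_comm, smul_mul_assoc, smul_sub]
    rw [this, _root_.map_smul, h, _root_.map_smul, smul_sub, mulVec_smul, smul_mulVec]
  have hzeroR : ∀ x, P x 0 := by
    intro x
    simp only [hP, mul_zero, zero_mul, sub_self, map_zero, mulVec_zero, zero_mulVec]
  -- for fixed y in {a,b}, P · y on span
  have key : ∀ y ∈ ({a, b} : Set (Matrix (Fin 2) (Fin 2) ℝ)),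
      ∀ x ∈ Submodule.span ℝ ({a, b} : Set (Matrix (Fin 2) (Fin 2) ℝ)), P x y := by
    intro y hy x hx
    induction hx using Submodule.span_induction with
    | mem z hz =>
        rcases hz with rfl | rfl <;> rcases hy with rfl | rfl
        · exact hself _
        · exact hab
        · exact hsymm _ _ hab
        · exact hself _
    | zero => exact hsymm _ _ (hzeroR y)
    | add u v _ _ hu hv => exact hsymm _ _ (haddR y u v (hsymm _ _ hu) (hsymm _ _ hv))
    | smul c u _ hu => exact hsymm _ _ (hsmulR c y u (hsymm _ _ hu))
  intro x hx y hy
  induction hy using Submodule.span_induction with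
  | mem z hz => exact key z hz x hx
  | zero => exact hzeroR x
  | add u v _ _ hu hv => exact haddR x u v hu hv
  | smul c u _ hu => exact hsmulR c x u hu

/-- for `h = ⟨e2 + γ e4, e1⟩ ⊆ gl₂(ℝ)`, a linear map `α` with
`α (e2 + γ e4) = 0`, `α e1 = c21 f1 + c22 f2` is a 1-cocycle with values in `ℝ²` iff
`(γ+3) c21 = 0` and `(γ+1) c22 = 0`; in particular for `γ ∉ {-3,-1}` only the trivial
cocycle occurs, while for `γ = -3` there is a nontrivial cocycle with `α e1 = f1`. -/
theorem cocycle_on_h24_iff (γ : ℝ)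
    (e1 e2 e4 : Matrix (Fin 2) (Fin 2) ℝ) (f1 f2 : Fin 2 → ℝ)
    (he1 : e1 = !![0, 0; 1, 0]) (he2 : e2 = !![1/2, 0; 0, -1/2])
    (he4 : e4 = !![1/2, 0; 0, 1/2]) (hf1 : f1 = ![1, 0]) (hf2 : f2 = ![0, 1]) :
    (∀ (c21 c22 : ℝ) (α : Matrix (Fin 2) (Fin 2) ℝ →ₗ[ℝ] (Fin 2 → ℝ)),
      α (e2 + γ • e4) = 0 → α e1 = c21 • f1 + c22 • f2 →
      ((∀ x ∈ Submodule.span ℝ ({e2 + γ • e4, e1} : Set (Matrix (Fin 2) (Fin 2) ℝ)),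
        ∀ y ∈ Submodule.span ℝ ({e2 + γ • e4, e1} : Set (Matrix (Fin 2) (Fin 2) ℝ)),
          α (x * y - y * x) = x.mulVec (α y) - y.mulVec (α x)) ↔
        ((γ + 3) * c21 = 0 ∧ (γ + 1) * c22 = 0))) ∧
    (γ ≠ -3 → γ ≠ -1 →
      ∀ (c21 c22 : ℝ) (α : Matrix (Fin 2) (Fin 2) ℝ →ₗ[ℝ] (Fin 2 → ℝ)),
        α (e2 + γ • e4) = 0 → α e1 = c21 • f1 + c22 • f2 →
        (∀ x ∈ Submodule.span ℝ ({e2 + γ • e4, e1} : Set (Matrix (Fin 2) (Fin 2) ℝ)),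
          ∀ y ∈ Submodule.span ℝ ({e2 + γ • e4, e1} : Set (Matrix (Fin 2) (Fin 2) ℝ)),
            α (x * y - y * x) = x.mulVec (α y) - y.mulVec (α x)) →
        c21 = 0 ∧ c22 = 0) ∧
    (γ = -3 →
      ∃ α : Matrix (Fin 2) (Fin 2) ℝ →ₗ[ℝ] (Fin 2 → ℝ),
        α (e2 + γ • e4) = 0 ∧ α e1 = f1 ∧
        (∀ x ∈ Submodule.span ℝ ({e2 + γ • e4, e1} : Set (Matrix (Fin 2) (Fin 2) ℝ)),
          ∀ y ∈ Submodule.span ℝ ({e2 + γ • e4, e1} : Set (Matrix (Fin 2) (Fin 2) ℝ)),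
            α (x * y - y * x) = x.mulVec (α y) - y.mulVec (α x))) := by
  subst he1 he2 he4 hf1 hf2
  set a : Matrix (Fin 2) (Fin 2) ℝ := !![1/2, 0; 0, -1/2] + γ • !![1/2, 0; 0, 1/2] with ha
  set b : Matrix (Fin 2) (Fin 2) ℝ := !![0, 0; 1, 0] with hb
  have hcomm : a * b - b * a = (-1 : ℝ) • b := by
    simp only [ha, hb]
    ext i j
    fin_cases i <;> fin_cases j <;>
      simp [Matrix.mul_apply, Fin.sum_univ_two, Matrix.smul_apply] <;> ring
  have main : ∀ (c21 c22 : ℝ) (α : Matrix (Fin 2) (Fin 2) ℝ →ₗ[ℝ] (Fin 2 → ℝ)),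
      α a = 0 → α b = c21 • ![(1:ℝ), 0] + c22 • ![(0:ℝ), 1] →
      ((∀ x ∈ Submodule.span ℝ ({a, b} : Set (Matrix (Fin 2) (Fin 2) ℝ)),
        ∀ y ∈ Submodule.span ℝ ({a, b} : Set (Matrix (Fin 2) (Fin 2) ℝ)),
          α (x * y - y * x) = x.mulVec (α y) - y.mulVec (α x)) ↔
        ((γ + 3) * c21 = 0 ∧ (γ + 1) * c22 = 0)) := by
    intro c21 c22 α hαa hαb
    constructor
    · intro hcoc
      have ha' : a ∈ Submodule.span ℝ ({a, b} : Set (Matrix (Fin 2) (Fin 2) ℝ)) :=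
        Submodule.subset_span (Set.mem_insert _ _)
      have hb' : b ∈ Submodule.span ℝ ({a, b} : Set (Matrix (Fin 2) (Fin 2) ℝ)) :=
        Submodule.subset_span (Set.mem_insert_of_mem _ rfl)
      have h := hcoc a ha' b hb'
      rw [hcomm, _root_.map_smul, hαa, hαb, mulVec_zero] at h
      have h0 := congrFun h 0
      have h1 := congrFun h 1
      simp [ha, mulVec, dotProduct, Fin.sum_univ_two] at h0 h1
      constructor <;> [skip; skip] <;> nlinarith [h0, h1]
    · intro ⟨h1, h2⟩
      apply cocycle_span_aux
      rw [hcomm, _root_.map_smul, hαa, hαb, mulVec_zero]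
      ext i
      fin_cases i <;>
        simp [ha, mulVec, dotProduct, Fin.sum_univ_two] <;> nlinarith [h1, h2]
  refine ⟨main, ?_, ?_⟩
  · intro hγ3 hγ1 c21 c22 α hαa hαb hcoc
    have hh := (main c21 c22 α hαa hαb).mp hcoc
    have h3 : γ + 3 ≠ 0 := fun h => hγ3 (by linarith)
    have h1 : γ + 1 ≠ 0 := fun h => hγ1 (by linarith)
    exact ⟨(mul_eq_zero.mp hh.1).resolve_left h3, (mul_eq_zero.mp hh.2).resolve_left h1⟩
  · intro hγ
    let αm : Matrix (Fin 2) (Fin 2) ℝ →ₗ[ℝ] (Fin 2 → ℝ) :=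
      { toFun := fun M => M 1 0 • ![(1:ℝ), 0]
        map_add' := fun M N => by simp [add_smul]
        map_smul' := fun c M => by simp [smul_smul] }
    have hαa : αm a = 0 := by simp [αm, ha]
    have hαb : αm b = (1:ℝ) • ![(1:ℝ), 0] + (0:ℝ) • ![(0:ℝ), 1] := by simp [αm, hb]
    refine ⟨αm, hαa, by simpa using hαb, ?_⟩
    exact (main 1 0 αm hαa hαb).mpr (by constructor <;> simp [hγ])
end

section
/- Every matrix S in SL_3(ℝ) can be written as a product S = AM, where A belongs to the subgroup A1 of matrices of the form [[a,b,x],[c,d,y],[0,0,(ad−bc)^{−1}]] with ad − bc ≠ 0, and M is one of the matrices M1(c1,c2) = [[1,0,0],[0,1,0],[c1,c2,1]], M2(c1,c2) = [[−1,0,0],[0,0,1],[c1,1,c2]], or M3(c1,c2) = [[0,0,−1],[0,1,0],[1,c1,c2]] for some real c1, c2. -/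
/-!
The bottom row of `S` is nonzero since `det S = 1`; dividing it by its last nonzero entry `t`
makes it the bottom row of one of `M₁, M₂, M₃`, all of determinant one. Then `A = S * M⁻¹` has
bottom row `t • e₂` and determinant one, which forces `A = [[a, b, x], [c, d, y], [0, 0, t]]`
with `t * (a * d - b * c) = 1`.
-/

open Matrix

theorem Matrix.mul_inv_row_eq_of_row_eq_smul {n K : Type*} [Fintype n] [DecidableEq n]
    [CommRing K] {S M : Matrix n n K} (hM : IsUnit M.det) {i : n} {t : K} (h : S i = t • M i) :
    (S * M⁻¹) i = t • Pi.single i 1 := by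
  rw [mul_apply_eq_vecMul, h, smul_vecMul, ← mul_apply_eq_vecMul, mul_nonsing_inv M hM]
  ext j
  simp [one_eq_pi_single]

theorem Matrix.eq_affine_of_det_eq_one {K : Type*} [Field K] {A : Matrix (Fin 3) (Fin 3) K}
    (hA : A.det = 1) (h₀ : A 2 0 = 0) (h₁ : A 2 1 = 0) :
    A 0 0 * A 1 1 - A 0 1 * A 1 0 ≠ 0 ∧
      A = !![A 0 0, A 0 1, A 0 2; A 1 0, A 1 1, A 1 2; 0, 0, (A 0 0 * A 1 1 - A 0 1 * A 1 0)⁻¹] := by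
  have hdet : A 2 2 * (A 0 0 * A 1 1 - A 0 1 * A 1 0) = 1 := by
    rw [det_fin_three, h₀, h₁] at hA
    linear_combination hA
  refine ⟨right_ne_zero_of_mul_eq_one hdet, ?_⟩
  rw [inv_eq_of_mul_eq_one_left hdet]
  ext i j
  fin_cases i <;> fin_cases j <;> simp [h₀, h₁]

theorem Matrix.exists_affine_mul_of_row_two_eq_smul {K : Type*} [Field K]
    {S M : Matrix (Fin 3) (Fin 3) K} (hS : S.det = 1) (hM : M.det = 1) {t : K}
    (h : S 2 = t • M 2) :
    ∃ a b c d x y : K, a * d - b * c ≠ 0 ∧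
      S = !![a, b, x; c, d, y; 0, 0, (a * d - b * c)⁻¹] * M := by
  have hMu : IsUnit M.det := hM ▸ isUnit_one
  have hrow := mul_inv_row_eq_of_row_eq_smul hMu h
  have hA : (S * M⁻¹).det = 1 := by simp [hS, hM]
  obtain ⟨hne, hform⟩ := eq_affine_of_det_eq_one hA (by simp [hrow]) (by simp [hrow])
  exact ⟨_, _, _, _, _, _, hne, by rw [← hform, nonsing_inv_mul_cancel_right _ _ hMu]⟩

/-- every `S ∈ SL₃(ℝ)` factors as `S = A * M` with `A` in the affine
subgroup `A₁` and `M` one of `M₁(c₁,c₂)`, `M₂(c₁,c₂)`, `M₃(c₁,c₂)`. -/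
theorem sl3_decomposition_A1 (S : Matrix (Fin 3) (Fin 3) ℝ) (hS : S.det = 1) :
    ∃ a b c d x y c1 c2 : ℝ, a * d - b * c ≠ 0 ∧
      (S = !![a, b, x; c, d, y; 0, 0, (a * d - b * c)⁻¹] * !![1, 0, 0; 0, 1, 0; c1, c2, 1] ∨
       S = !![a, b, x; c, d, y; 0, 0, (a * d - b * c)⁻¹] * !![-1, 0, 0; 0, 0, 1; c1, 1, c2] ∨
       S = !![a, b, x; c, d, y; 0, 0, (a * d - b * c)⁻¹] * !![0, 0, -1; 0, 1, 0; 1, c1, c2]) := by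
  obtain h | h | h : S 2 2 ≠ 0 ∨ S 2 1 ≠ 0 ∨ S 2 0 ≠ 0 := by
    by_contra! h
    refine one_ne_zero (hS ▸ det_eq_zero_of_row_eq_zero 2 fun j => ?_)
    fin_cases j <;> simp [h]
  · obtain ⟨a, b, c, d, x, y, hne, hSA⟩ := exists_affine_mul_of_row_two_eq_smul hS
      (M := !![1, 0, 0; 0, 1, 0; S 2 0 / S 2 2, S 2 1 / S 2 2, 1]) (t := S 2 2)
      (by simp [det_fin_three]) (by ext j; fin_cases j <;> simp [field])
    exact ⟨a, b, c, d, x, y, _, _, hne, .inl hSA⟩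
  · obtain ⟨a, b, c, d, x, y, hne, hSA⟩ := exists_affine_mul_of_row_two_eq_smul hS
      (M := !![-1, 0, 0; 0, 0, 1; S 2 0 / S 2 1, 1, S 2 2 / S 2 1]) (t := S 2 1)
      (by simp [det_fin_three]) (by ext j; fin_cases j <;> simp [field])
    exact ⟨a, b, c, d, x, y, _, _, hne, .inr (.inl hSA)⟩
  · obtain ⟨a, b, c, d, x, y, hne, hSA⟩ := exists_affine_mul_of_row_two_eq_smul hS
      (M := !![0, 0, -1; 0, 1, 0; 1, S 2 1 / S 2 0, S 2 2 / S 2 0]) (t := S 2 0)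
      (by simp [det_fin_three]) (by ext j; fin_cases j <;> simp [field])
    exact ⟨a, b, c, d, x, y, _, _, hne, .inr (.inr hSA)⟩
end

section
/- Every matrix S in SL_3(ℝ) can be written as a product S = AN, where A belongs to the subgroup A2 of matrices of the form [[a,b,0],[c,d,0],[x,y,(ad−bc)^{−1}]] with ad − bc ≠ 0, and N is one of the matrices N1(c1,c2) = [[1,0,c1],[0,1,c2],[0,0,1]], N2(c1,c2) = [[−1,c1,0],[0,c2,1],[0,1,0]], or N3(c1,c2) = [[c1,0,−1],[c2,1,0],[1,0,0]] for some real c1, c2. -/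
/-!
Each `Nᵢ(c₁, c₂)` is `N₁(c₁, c₂) * wᵢ` for a signed permutation matrix `wᵢ` of determinant one
(`w₁ = 1`). Given `wᵢ`, the matrix `A = S * wᵢ⁻¹ * N₁(-c₁, -c₂)` lies in `A₂` as soon as the upper two
entries of its last column vanish: then `det A = 1` forces its corner entry to be the inverse of
its leading 2×2 minor. Those two entries vanish for a unique `(c₁, c₂)` provided the leading
2×2 minor of `S * wᵢ⁻¹` is nonzero; for `i = 1, 2, 3` this is, up to sign, the minor of the first
two rows of `S` on columns `{0, 1}`, `{0, 2}`, `{1, 2}`, and these cannot all vanish because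
Laplace expansion along the last row writes `det S = 1` as a combination of them.
-/

open Matrix

namespace AffineDecomposition

variable {K : Type*} [Field K]

def unipotent (c₁ c₂ : K) : Matrix (Fin 3) (Fin 3) K := !![1, 0, c₁; 0, 1, c₂; 0, 0, 1]

def affineBlock (a b c d x y : K) : Matrix (Fin 3) (Fin 3) K :=
  !![a, b, 0; c, d, 0; x, y, (a * d - b * c)⁻¹]

def leadingMinor (M : Matrix (Fin 3) (Fin 3) K) : K := M 0 0 * M 1 1 - M 0 1 * M 1 0

def w₂ : Matrix (Fin 3) (Fin 3) K := !![-1, 0, 0; 0, 0, 1; 0, 1, 0]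

def w₃ : Matrix (Fin 3) (Fin 3) K := !![0, 0, -1; 0, 1, 0; 1, 0, 0]

lemma det_unipotent (c₁ c₂ : K) : (unipotent c₁ c₂).det = 1 := by
  simp [unipotent, det_fin_three]

lemma unipotent_neg_mul_unipotent (c₁ c₂ : K) : unipotent (-c₁) (-c₂) * unipotent c₁ c₂ = 1 := by
  ext i j
  fin_cases i <;> fin_cases j <;> simp [unipotent]

lemma det_w₂ : (w₂ : Matrix (Fin 3) (Fin 3) K).det = 1 := by
  simp [w₂, det_fin_three]

lemma det_w₃ : (w₃ : Matrix (Fin 3) (Fin 3) K).det = 1 := by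
  simp [w₃, det_fin_three]

lemma inv_w₂ : (w₂ : Matrix (Fin 3) (Fin 3) K)⁻¹ = w₂ :=
  inv_eq_left_inv <| by
    ext i j
    fin_cases i <;> fin_cases j <;> simp [w₂]

lemma inv_w₃ : (w₃ : Matrix (Fin 3) (Fin 3) K)⁻¹ = !![0, 0, 1; 0, 1, 0; -1, 0, 0] :=
  inv_eq_left_inv <| by
    ext i j
    fin_cases i <;> fin_cases j <;> simp [w₃]

lemma unipotent_mul_w₂ (c₁ c₂ : K) : unipotent c₁ c₂ * w₂ = !![-1, c₁, 0; 0, c₂, 1; 0, 1, 0] := by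
  simp [unipotent, w₂]

lemma unipotent_mul_w₃ (c₁ c₂ : K) : unipotent c₁ c₂ * w₃ = !![c₁, 0, -1; c₂, 1, 0; 1, 0, 0] := by
  simp [unipotent, w₃]

lemma mul_unipotent_apply_two (T : Matrix (Fin 3) (Fin 3) K) (c₁ c₂ : K) (i : Fin 3) :
    (T * unipotent c₁ c₂) i 2 = T i 0 * c₁ + T i 1 * c₂ + T i 2 := by
  simp [unipotent, mul_apply, Fin.sum_univ_three]

lemma eq_affineBlock_of_det_eq_one {A : Matrix (Fin 3) (Fin 3) K} (hA : A.det = 1)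
    (h₀ : A 0 2 = 0) (h₁ : A 1 2 = 0) :
    leadingMinor A ≠ 0 ∧ A = affineBlock (A 0 0) (A 0 1) (A 1 0) (A 1 1) (A 2 0) (A 2 1) := by
  have hprod : A 2 2 * leadingMinor A = 1 := by
    rw [← hA, det_fin_three, h₀, h₁, leadingMinor]
    ring
  refine ⟨right_ne_zero_of_mul_eq_one hprod, ?_⟩
  conv_lhs => rw [eta_fin_three A]
  rw [affineBlock, ← leadingMinor, ← eq_inv_of_mul_eq_one_left hprod, h₀, h₁]

lemma exists_eq_affineBlock_mul_unipotent {T : Matrix (Fin 3) (Fin 3) K} (hT : T.det = 1)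
    (hminor : leadingMinor T ≠ 0) :
    ∃ a b c d x y c₁ c₂ : K, a * d - b * c ≠ 0 ∧ T = affineBlock a b c d x y * unipotent c₁ c₂ := by
  -- Cramer's rule for the system making the upper part of the last column of `A` vanish
  set c₁ := (T 1 1 * T 0 2 - T 0 1 * T 1 2) / leadingMinor T
  set c₂ := (T 0 0 * T 1 2 - T 1 0 * T 0 2) / leadingMinor T
  set A := T * unipotent (-c₁) (-c₂)
  have hA : A.det = 1 := by rw [det_mul, hT, det_unipotent, one_mul]
  obtain ⟨h₀, h₁⟩ : A 0 2 = 0 ∧ A 1 2 = 0 := by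
    constructor <;>
    · simp only [A, c₁, c₂, mul_unipotent_apply_two]
      field_simp
      rw [leadingMinor]
      ring
  obtain ⟨hδ, hAform⟩ := eq_affineBlock_of_det_eq_one hA h₀ h₁
  refine ⟨A 0 0, A 0 1, A 1 0, A 1 1, A 2 0, A 2 1, c₁, c₂, hδ, ?_⟩
  rw [← hAform, mul_assoc, unipotent_neg_mul_unipotent, mul_one]

lemma leadingMinor_mul_inv_w₂ (S : Matrix (Fin 3) (Fin 3) K) :
    leadingMinor (S * w₂⁻¹) = S 1 0 * S 0 2 - S 0 0 * S 1 2 := by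
  rw [inv_w₂]
  simp only [leadingMinor, w₂, mul_apply, Fin.sum_univ_three, of_apply, cons_val_zero, cons_val_one,
    cons_val, cons_val_fin_one, cons_val']
  ring

lemma leadingMinor_mul_inv_w₃ (S : Matrix (Fin 3) (Fin 3) K) :
    leadingMinor (S * w₃⁻¹) = S 0 1 * S 1 2 - S 0 2 * S 1 1 := by
  rw [inv_w₃]
  simp only [leadingMinor, mul_apply, Fin.sum_univ_three, of_apply, cons_val_zero, cons_val_one,
    cons_val, cons_val_fin_one, cons_val']
  ring

lemma exists_leadingMinor_mul_inv_ne_zero {S : Matrix (Fin 3) (Fin 3) K} (hS : S.det ≠ 0) :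
    ∃ w ∈ ({1, w₂, w₃} : Set (Matrix (Fin 3) (Fin 3) K)), leadingMinor (S * w⁻¹) ≠ 0 := by
  by_contra! h
  have h₁ : S 0 0 * S 1 1 - S 0 1 * S 1 0 = 0 := by simpa [leadingMinor] using h 1 (by simp)
  have h₂ := leadingMinor_mul_inv_w₂ S ▸ h w₂ (by simp)
  have h₃ := leadingMinor_mul_inv_w₃ S ▸ h w₃ (by simp)
  -- Laplace expansion along the last row
  apply hS
  rw [det_fin_three]
  linear_combination S 2 2 * h₁ + S 2 1 * h₂ + S 2 0 * h₃

lemma exists_eq_affineBlock_mul_unipotent_mul {S w : Matrix (Fin 3) (Fin 3) K} (hS : S.det = 1)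
    (hw : w.det = 1) (hminor : leadingMinor (S * w⁻¹) ≠ 0) :
    ∃ a b c d x y c₁ c₂ : K, a * d - b * c ≠ 0 ∧
      S = affineBlock a b c d x y * (unipotent c₁ c₂ * w) := by
  have hSw : (S * w⁻¹).det = 1 := by simp [det_mul, hS, hw]
  obtain ⟨a, b, c, d, x, y, c₁, c₂, hδ, hT⟩ := exists_eq_affineBlock_mul_unipotent hSw hminor
  refine ⟨a, b, c, d, x, y, c₁, c₂, hδ, ?_⟩
  rw [← mul_assoc, ← hT, nonsing_inv_mul_cancel_right (A := w) S (by simp [hw])]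

end AffineDecomposition

open AffineDecomposition in
/-- every `S ∈ SL₃(ℝ)` factors as `S = A * N` with `A` in the affine
subgroup `A₂` and `N` one of `N₁(c₁,c₂)`, `N₂(c₁,c₂)`, `N₃(c₁,c₂)`. -/
theorem sl3_decomposition_A2 (S : Matrix (Fin 3) (Fin 3) ℝ) (hS : S.det = 1) :
    ∃ a b c d x y c1 c2 : ℝ, a * d - b * c ≠ 0 ∧
      (S = !![a, b, 0; c, d, 0; x, y, (a * d - b * c)⁻¹] * !![1, 0, c1; 0, 1, c2; 0, 0, 1] ∨
       S = !![a, b, 0; c, d, 0; x, y, (a * d - b * c)⁻¹] * !![-1, c1, 0; 0, c2, 1; 0, 1, 0] ∨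
       S = !![a, b, 0; c, d, 0; x, y, (a * d - b * c)⁻¹] * !![c1, 0, -1; c2, 1, 0; 1, 0, 0]) := by
  obtain ⟨w, hw, hminor⟩ := exists_leadingMinor_mul_inv_ne_zero (hS ▸ one_ne_zero)
  have hdet : w.det = 1 := by
    rcases hw with rfl | rfl | rfl
    exacts [det_one, det_w₂, det_w₃]
  obtain ⟨a, b, c, d, x, y, c₁, c₂, hδ, hSw⟩ :=
    exists_eq_affineBlock_mul_unipotent_mul hS hdet hminor
  refine ⟨a, b, c, d, x, y, c₁, c₂, hδ, ?_⟩
  rcases hw with rfl | rfl | rfl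
  · exact Or.inl (by rwa [mul_one] at hSw)
  · exact Or.inr (Or.inl (by rwa [unipotent_mul_w₂] at hSw))
  · exact Or.inr (Or.inr (by rwa [unipotent_mul_w₃] at hSw))
end

section
/- For every real κ with κ ≠ 1, the one-dimensional subalgebra ⟨e2 + κ e4⟩ of sl_3(ℝ)-embedded form ⟨E2 + κD⟩ is conjugate under SL_3(ℝ) to ⟨E2 + κ̃D⟩ where κ̃ = (κ+3)/(κ−1); that is, there exists g ∈ SL_3(ℝ) with g (E2 + κD) g^{−1} ∈ ℝ·(E2 + κ̃D). -/
open Matrix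

/-- for `κ ≠ 1`, the subalgebra `⟨E2 + κ D⟩` of `sl₃(ℝ)` is conjugate under
`SL₃(ℝ)` to `⟨E2 + κ̃ D⟩`, `κ̃ = (κ+3)/(κ-1)`: some `g` of determinant one conjugates
`E2 + κ D` into the line `ℝ·(E2 + κ̃ D)`. -/
theorem conjugate_E2_kappaD (κ : ℝ) (hκ : κ ≠ 1)
    (E2 D : Matrix (Fin 3) (Fin 3) ℝ)
    (hE2 : E2 = !![1/2, 0, 0; 0, -1/2, 0; 0, 0, 0])
    (hD : D = !![1/6, 0, 0; 0, 1/6, 0; 0, 0, -1/3]) :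
    ∃ g : Matrix (Fin 3) (Fin 3) ℝ, g.det = 1 ∧
      ∃ c : ℝ, g * (E2 + κ • D) * g⁻¹ = c • (E2 + ((κ + 3) / (κ - 1)) • D) := by
  have hk : κ - 1 ≠ 0 := sub_ne_zero.mpr hκ
  refine ⟨!![(0:ℝ),0,1;0,-1,0;1,0,0], ?_, (1 - κ)/2, ?_⟩
  · simp [Matrix.det_fin_three]
  · have hinv : (!![(0:ℝ),0,1;0,-1,0;1,0,0])⁻¹ = !![(0:ℝ),0,1;0,-1,0;1,0,0] := by
      rw [Matrix.inv_eq_right_inv]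
      ext i j
      fin_cases i <;> fin_cases j <;>
        simp [Matrix.mul_apply, Fin.sum_univ_three, Matrix.vecHead, Matrix.vecTail]
    rw [hinv, hE2, hD]
    ext i j
    fin_cases i <;> fin_cases j <;>
      simp [Matrix.mul_apply, Fin.sum_univ_three, Matrix.vecHead, Matrix.vecTail] <;>
      (try (field_simp; ring))
end

section
/- The three-dimensional subalgebra ⟨E2 − D + P1, E1, P2⟩ of sl_3(ℝ) is not conjugate under SL_3(ℝ) to the subalgebra ⟨E2 + μD, E1, P2⟩ for any real μ. -/
/-!
Every element of `⟨E2 + μ D, E1, P2⟩` lies in the associative algebra `T` of matrices whose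
off-diagonal entries vanish outside the middle row. Conjugation by `g` is an algebra automorphism,
so if it carried `⟨E2 - D + P1, E1, P2⟩` onto that subalgebra, it would carry the associative
algebra generated by `E2 - D + P1` and `E1` into `T`. That algebra contains `P1`, the nilpotent
part of `E2 - D + P1`. But square-zero elements of `T` multiply to zero, while `E1 P1 = P2 ≠ 0`.
-/

open Matrix

section MiddleRow

variable (R : Type*) [CommRing R]

-- The matrices stabilising `⟨e₁⟩`, `⟨e₀, e₁⟩` and `⟨e₁, e₂⟩`.
def middleRowSubalgebra : Subalgebra R (Matrix (Fin 3) (Fin 3) R) where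
  carrier := {M | M 0 1 = 0 ∧ M 0 2 = 0 ∧ M 2 0 = 0 ∧ M 2 1 = 0}
  mul_mem' := by
    rintro M N ⟨m01, m02, m20, m21⟩ ⟨n01, n02, n20, n21⟩
    simp [mul_apply, Fin.sum_univ_three, m01, m02, m20, m21, n01, n02, n20, n21]
  add_mem' := by
    rintro M N ⟨m01, m02, m20, m21⟩ ⟨n01, n02, n20, n21⟩
    simp [m01, m02, m20, m21, n01, n02, n20, n21]
  algebraMap_mem' r := by simp [algebraMap_eq_diagonal]

variable {R}

theorem mem_middleRowSubalgebra {M : Matrix (Fin 3) (Fin 3) R} :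
    M ∈ middleRowSubalgebra R ↔ M 0 1 = 0 ∧ M 0 2 = 0 ∧ M 2 0 = 0 ∧ M 2 1 = 0 :=
  Iff.rfl

theorem diag_eq_zero_of_mem_middleRowSubalgebra [NoZeroDivisors R] {M : Matrix (Fin 3) (Fin 3) R}
    (hM : M ∈ middleRowSubalgebra R) (hM2 : M * M = 0) (i : Fin 3) : M i i = 0 := by
  obtain ⟨m01, m02, m20, m21⟩ := hM
  have := congrFun (congrFun hM2 i) i
  fin_cases i <;> simpa [mul_apply, Fin.sum_univ_three, m01, m02, m20, m21] using this

theorem mul_eq_zero_of_mem_middleRowSubalgebra [NoZeroDivisors R] {M N : Matrix (Fin 3) (Fin 3) R}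
    (hM : M ∈ middleRowSubalgebra R) (hN : N ∈ middleRowSubalgebra R)
    (hM2 : M * M = 0) (hN2 : N * N = 0) : M * N = 0 := by
  have hMd := diag_eq_zero_of_mem_middleRowSubalgebra hM hM2
  have hNd := diag_eq_zero_of_mem_middleRowSubalgebra hN hN2
  obtain ⟨m01, m02, m20, m21⟩ := hM
  obtain ⟨n01, n02, n20, n21⟩ := hN
  ext i j
  fin_cases i <;> fin_cases j <;>
    simp [mul_apply, Fin.sum_univ_three, m01, m02, m20, m21, n01, n02, n20, n21, hMd, hNd]

end MiddleRow

theorem Matrix.exists_algEquiv_conj {n R : Type*} [Fintype n] [DecidableEq n] [CommRing R]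
    {g : Matrix n n R} (hg : IsUnit g.det) :
    ∃ φ : Matrix n n R ≃ₐ[R] Matrix n n R, ∀ x, g * x * g⁻¹ = φ x := by
  refine ⟨MulSemiringAction.toAlgEquiv R _
    (ConjAct.toConjAct ((isUnit_iff_isUnit_det g).2 hg).unit), fun x => ?_⟩
  simp [ConjAct.units_smul_def, coe_units_inv]

namespace sl3

noncomputable section

def E1 : Matrix (Fin 3) (Fin 3) ℝ := !![0, 0, 0; 1, 0, 0; 0, 0, 0]
def E2 : Matrix (Fin 3) (Fin 3) ℝ := !![1/2, 0, 0; 0, -1/2, 0; 0, 0, 0]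
def D : Matrix (Fin 3) (Fin 3) ℝ := !![1/6, 0, 0; 0, 1/6, 0; 0, 0, -1/3]
def P1 : Matrix (Fin 3) (Fin 3) ℝ := !![0, 0, 1; 0, 0, 0; 0, 0, 0]
def P2 : Matrix (Fin 3) (Fin 3) ℝ := !![0, 0, 0; 0, 0, 1; 0, 0, 0]

theorem span_le_middleRowSubalgebra (μ : ℝ) :
    Submodule.span ℝ {E2 + μ • D, E1, P2} ≤ Subalgebra.toSubmodule (middleRowSubalgebra ℝ) := by
  rw [Submodule.span_le]
  rintro x (rfl | rfl | rfl) <;> simp [mem_middleRowSubalgebra, E1, E2, D, P2]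

-- `P1` is the nilpotent part of `E2 - D + P1 = diag(1/3, -2/3, 1/3) + P1`.
theorem P1_mem_adjoin : P1 ∈ Algebra.adjoin ℝ {E2 - D + P1} := by
  have hpoly :
      (3 : ℝ) • (E2 - D + P1) ^ 3 + (E2 - D + P1) ^ 2 - (2 / 3 : ℝ) • (E2 - D + P1) = P1 := by
    ext i j
    fin_cases i <;> fin_cases j <;>
      norm_num [E2, D, P1, pow_succ, mul_apply, Fin.sum_univ_three]
  have hA := Algebra.self_mem_adjoin_singleton ℝ (E2 - D + P1)
  have hmem := sub_mem (add_mem (Subalgebra.smul_mem _ (pow_mem hA 3) (3 : ℝ)) (pow_mem hA 2))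
    (Subalgebra.smul_mem _ hA (2 / 3 : ℝ))
  rwa [hpoly] at hmem

theorem E1_mul_self : E1 * E1 = 0 := by
  ext i j; fin_cases i <;> fin_cases j <;> simp [E1, mul_apply, Fin.sum_univ_three]

theorem P1_mul_self : P1 * P1 = 0 := by
  ext i j; fin_cases i <;> fin_cases j <;> simp [P1, mul_apply, Fin.sum_univ_three]

theorem E1_mul_P1 : E1 * P1 = P2 := by
  ext i j; fin_cases i <;> fin_cases j <;> simp [E1, P1, P2, mul_apply, Fin.sum_univ_three]

theorem P2_ne_zero : P2 ≠ 0 := fun h => by simpa [P2] using congrFun (congrFun h 1) 2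

end

end sl3

/-- the subalgebra `⟨E2 - D + P1, E1, P2⟩` of `sl₃(ℝ)` is not conjugate
under `SL₃(ℝ)` to `⟨E2 + μ D, E1, P2⟩` for any real `μ`. -/
theorem not_conjugate_f38_f37 (μ : ℝ)
    (E1 E2 D P1 P2 : Matrix (Fin 3) (Fin 3) ℝ)
    (hE1 : E1 = !![0, 0, 0; 1, 0, 0; 0, 0, 0])
    (hE2 : E2 = !![1/2, 0, 0; 0, -1/2, 0; 0, 0, 0])
    (hD : D = !![1/6, 0, 0; 0, 1/6, 0; 0, 0, -1/3])
    (hP1 : P1 = !![0, 0, 1; 0, 0, 0; 0, 0, 0])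
    (hP2 : P2 = !![0, 0, 0; 0, 0, 1; 0, 0, 0]) :
    ¬ ∃ g : Matrix (Fin 3) (Fin 3) ℝ, g.det = 1 ∧
      (fun x => g * x * g⁻¹) ''
          (Submodule.span ℝ ({E2 - D + P1, E1, P2} : Set (Matrix (Fin 3) (Fin 3) ℝ)) : Set _) =
        (Submodule.span ℝ ({E2 + μ • D, E1, P2} : Set (Matrix (Fin 3) (Fin 3) ℝ)) : Set _) := by
  obtain rfl : E1 = sl3.E1 := hE1
  obtain rfl : E2 = sl3.E2 := hE2
  obtain rfl : D = sl3.D := hD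
  obtain rfl : P1 = sl3.P1 := hP1
  obtain rfl : P2 = sl3.P2 := hP2
  rintro ⟨g, hdet, hspan⟩
  obtain ⟨φ, hφ⟩ := exists_algEquiv_conj (hdet ▸ isUnit_one : IsUnit g.det)
  set T := (middleRowSubalgebra ℝ).comap φ.toAlgHom
  have h_gens : ∀ x ∈ ({sl3.E2 - sl3.D + sl3.P1, sl3.E1, sl3.P2} : Set _), x ∈ T := by
    intro x hx
    apply sl3.span_le_middleRowSubalgebra μ
    rw [← SetLike.mem_coe, ← hspan]
    exact ⟨x, Submodule.subset_span hx, hφ x⟩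
  have hA : sl3.E2 - sl3.D + sl3.P1 ∈ T := h_gens _ (by simp)
  have hE1 : sl3.E1 ∈ T := h_gens _ (by simp)
  have hP1 : sl3.P1 ∈ T := Algebra.adjoin_le (Set.singleton_subset_iff.2 hA) sl3.P1_mem_adjoin
  have hφP2 : φ sl3.P2 = 0 := by
    rw [← sl3.E1_mul_P1, map_mul]
    exact mul_eq_zero_of_mem_middleRowSubalgebra hE1 hP1
      (by rw [← map_mul, sl3.E1_mul_self, map_zero]) (by rw [← map_mul, sl3.P1_mul_self, map_zero])
  exact sl3.P2_ne_zero ((map_eq_zero_iff φ φ.injective).1 hφP2)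
end

section
/- In sl_3(ℝ), the image of the subalgebra f_{3.5}^{γ} = ⟨E1+E3+γD, P1, P2⟩ under the outer automorphism 𝓘: x ↦ −xᵀ equals the subalgebra f_{3.6}^{−γ} = ⟨E1+E3−γD, R1, R2⟩, for every real γ. -/
open Matrix

noncomputable def Ifun : Matrix (Fin 3) (Fin 3) ℝ →ₗ[ℝ] Matrix (Fin 3) (Fin 3) ℝ where
  toFun x := -xᵀ
  map_add' x y := by simp [Matrix.transpose_add]; abel
  map_smul' c x := by simp

/-- in `sl₃(ℝ)`, the image of `f₃.₅^γ = ⟨E1+E3+γD, P1, P2⟩` under the outer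
automorphism `𝓘 : x ↦ -xᵀ` equals `f₃.₆^{-γ} = ⟨E1+E3-γD, R1, R2⟩`, for every real `γ`. -/
theorem outer_automorphism_maps_f35_to_f36 (γ : ℝ)
    (E1 E3 D P1 P2 R1 R2 : Matrix (Fin 3) (Fin 3) ℝ)
    (hE1 : E1 = !![0, 0, 0; 1, 0, 0; 0, 0, 0])
    (hE3 : E3 = !![0, -1, 0; 0, 0, 0; 0, 0, 0])
    (hD : D = !![1/6, 0, 0; 0, 1/6, 0; 0, 0, -1/3])
    (hP1 : P1 = !![0, 0, 1; 0, 0, 0; 0, 0, 0])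
    (hP2 : P2 = !![0, 0, 0; 0, 0, 1; 0, 0, 0])
    (hR1 : R1 = !![0, 0, 0; 0, 0, 0; 0, -1, 0])
    (hR2 : R2 = !![0, 0, 0; 0, 0, 0; 1, 0, 0]) :
    (fun x : Matrix (Fin 3) (Fin 3) ℝ => -xᵀ) ''
        (Submodule.span ℝ ({E1 + E3 + γ • D, P1, P2} : Set (Matrix (Fin 3) (Fin 3) ℝ)) : Set _) =
      (Submodule.span ℝ ({E1 + E3 - γ • D, R1, R2} : Set (Matrix (Fin 3) (Fin 3) ℝ)) : Set _) := by
  have hf : (fun x : Matrix (Fin 3) (Fin 3) ℝ => -xᵀ) = ⇑Ifun := rfl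
  rw [hf, ← Submodule.map_coe, Submodule.map_span]
  congr 1
  rw [Set.image_insert_eq, Set.image_insert_eq, Set.image_singleton]
  have h1 : Ifun (E1 + E3 + γ • D) = E1 + E3 - γ • D := by
    subst hE1 hE3 hD
    simp only [Ifun, LinearMap.coe_mk, AddHom.coe_mk]
    ext i j
    fin_cases i <;> fin_cases j <;>
      simp [Matrix.transpose, Matrix.vecHead, Matrix.vecTail] <;> ring
  have h2 : Ifun P1 = -R2 := by
    subst hP1 hR2
    simp only [Ifun, LinearMap.coe_mk, AddHom.coe_mk]
    ext i j
    fin_cases i <;> fin_cases j <;>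
      simp [Matrix.transpose, Matrix.vecHead, Matrix.vecTail]
  have h3 : Ifun P2 = R1 := by
    subst hP2 hR1
    simp only [Ifun, LinearMap.coe_mk, AddHom.coe_mk]
    ext i j
    fin_cases i <;> fin_cases j <;>
      simp [Matrix.transpose, Matrix.vecHead, Matrix.vecTail]
  rw [h1, h2, h3]
  have key : Submodule.span ℝ ({E1 + E3 - γ • D, -R2, R1} : Set (Matrix (Fin 3) (Fin 3) ℝ)) =
      Submodule.span ℝ ({E1 + E3 - γ • D, R1, R2} : Set (Matrix (Fin 3) (Fin 3) ℝ)) := by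
    apply le_antisymm <;> rw [Submodule.span_le]
    · rintro x hx
      simp only [Set.mem_insert_iff, Set.mem_singleton_iff] at hx
      simp only [SetLike.mem_coe]
      rcases hx with rfl | rfl | rfl
      · exact Submodule.subset_span (Set.mem_insert _ _)
      · exact Submodule.neg_mem _ (Submodule.subset_span (by right; right; rfl))
      · exact Submodule.subset_span (by right; left; rfl)
    · rintro x hx
      simp only [Set.mem_insert_iff, Set.mem_singleton_iff] at hx
      simp only [SetLike.mem_coe]
      rcases hx with rfl | rfl | rfl
      · exact Submodule.subset_span (Set.mem_insert _ _)
      · exact Submodule.subset_span (by right; right; rfl)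
      · have hm : -x ∈ Submodule.span ℝ
            ({E1 + E3 - γ • D, -x, R1} : Set (Matrix (Fin 3) (Fin 3) ℝ)) :=
          Submodule.subset_span (by right; left; rfl)
        simpa using Submodule.neg_mem _ hm
  rw [key]
end

section
/- In the affine Lie algebra aff_2(ℝ) = gl_2(ℝ) ⋉ ℝ² (basis e1,e2,e3,e4,f1,f2 as in the paper), the subalgebra s_{2.13} = ⟨e2 − 3e4, e1 + f1⟩ is a two-dimensional Lie subalgebra: the bracket [e2 − 3e4, e1 + f1] = −(e1 + f1). Moreover, s_{2.13} is not conjugate to ⟨e2 − 3e4, e1⟩ under the inner automorphism group of aff_2(ℝ). -/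
open Matrix

/-- The semidirect-product bracket of `aff₂(ℝ) = gl₂(ℝ) ⋉ ℝ²`. -/
def aff2Bracket (p q : Matrix (Fin 2) (Fin 2) ℝ × (Fin 2 → ℝ)) :
    Matrix (Fin 2) (Fin 2) ℝ × (Fin 2 → ℝ) :=
  (p.1 * q.1 - q.1 * p.1, p.1.mulVec q.2 - q.1.mulVec p.2)

/-- The adjoint action of the element `(g, w)` of `GL₂⁺(ℝ) ⋉ ℝ²` on `aff₂(ℝ)`. -/
noncomputable def aff2Ad (g : Matrix (Fin 2) (Fin 2) ℝ) (w : Fin 2 → ℝ)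
    (p : Matrix (Fin 2) (Fin 2) ℝ × (Fin 2 → ℝ)) :
    Matrix (Fin 2) (Fin 2) ℝ × (Fin 2 → ℝ) :=
  (g * p.1 * g⁻¹, g.mulVec p.2 - (g * p.1 * g⁻¹).mulVec w)

/-
Bilinearity and antisymmetry of the bracket give `[aX + bY, cX + dY] = (ad - bc) [X, Y]`, so a
plane is closed under the bracket as soon as the bracket of its two generators lies in it.
For non-conjugacy: `⟨e2 - 3e4, e1⟩` lies in `gl₂ × {0}`, while `(g, w)` sends `(A, 0)` to
`(gAg⁻¹, -gAg⁻¹w)`. As `A = e2 - 3e4 = diag(-1, -2)` is invertible, this forces `w = 0`, and then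
`e1 + f1` goes to `(g e1 g⁻¹, g f1)` with `g f1 ≠ 0`.
-/

local notation "aff₂" => Matrix (Fin 2) (Fin 2) ℝ × (Fin 2 → ℝ)

theorem aff2Bracket_smul_add_smul (X Y : aff₂) (a b c d : ℝ) :
    aff2Bracket (a • X + b • Y) (c • X + d • Y) = (a * d - b * c) • aff2Bracket X Y := by
  simp only [aff2Bracket, Prod.fst_add, Prod.snd_add, Prod.smul_fst, Prod.smul_snd, Prod.smul_mk,
    add_mul, mul_add, Matrix.smul_mul, Matrix.mul_smul, add_mulVec, mulVec_add, smul_mulVec,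
    mulVec_smul]
  ext1 <;> dsimp only <;> module

theorem aff2Bracket_mem_span_pair {X Y p q : aff₂}
    (hXY : aff2Bracket X Y ∈ Submodule.span ℝ {X, Y}) (hp : p ∈ Submodule.span ℝ {X, Y})
    (hq : q ∈ Submodule.span ℝ {X, Y}) : aff2Bracket p q ∈ Submodule.span ℝ {X, Y} := by
  obtain ⟨a, b, rfl⟩ := Submodule.mem_span_pair.mp hp
  obtain ⟨c, d, rfl⟩ := Submodule.mem_span_pair.mp hq
  rw [aff2Bracket_smul_add_smul]
  exact Submodule.smul_mem _ _ hXY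

theorem Prod.snd_eq_zero_of_mem_span_pair {R M N : Type*} [Semiring R] [AddCommMonoid M]
    [AddCommMonoid N] [Module R M] [Module R N] {a b : M} {p : M × N}
    (hp : p ∈ Submodule.span R {(a, 0), (b, 0)}) : p.2 = 0 := by
  obtain ⟨s, t, rfl⟩ := Submodule.mem_span_pair.mp hp
  simp

theorem aff2Ad_snd_ne_zero_or {g A B : Matrix (Fin 2) (Fin 2) ℝ} {v : Fin 2 → ℝ}
    (hg : g.det ≠ 0) (hA : A.det ≠ 0) (hv : v ≠ 0) (w : Fin 2 → ℝ) :
    (aff2Ad g w (A, 0)).2 ≠ 0 ∨ (aff2Ad g w (B, v)).2 ≠ 0 := by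
  by_cases hw : w = 0
  · subst hw
    right
    simpa only [aff2Ad, mulVec_zero, sub_zero] using mt (eq_zero_of_mulVec_eq_zero hg) hv
  · left
    have hconj : (g * A * g⁻¹).det ≠ 0 := by
      rwa [det_conj ((isUnit_iff_isUnit_det g).mpr hg.isUnit)]
    simpa only [aff2Ad, mulVec_zero, zero_sub, neg_ne_zero]
      using mt (eq_zero_of_mulVec_eq_zero hconj) hw

theorem aff2Bracket_s213_generators :
    aff2Bracket (!![-1, 0; 0, -2], 0) (!![0, 0; 1, 0], ![1, 0]) = -(!![0, 0; 1, 0], ![1, 0]) := by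
  ext i j <;> fin_cases i <;> try fin_cases j
  all_goals norm_num [aff2Bracket]

theorem linearIndependent_s213_generators :
    LinearIndependent ℝ ![((!![-1, 0; 0, -2] : Matrix (Fin 2) (Fin 2) ℝ), (0 : Fin 2 → ℝ)),
      (!![0, 0; 1, 0], ![1, 0])] := by
  refine LinearIndependent.pair_iff.mpr fun s t h => ?_
  have h00 := congrFun (congrFun (congrArg Prod.fst h) 0) 0
  have h10 := congrFun (congrFun (congrArg Prod.fst h) 1) 0
  simp_all

/-- in `aff₂(ℝ)`, `s₂.₁₃ = ⟨e2 - 3e4, e1 + f1⟩` is a two-dimensional Lie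
subalgebra with `[e2 - 3e4, e1 + f1] = -(e1 + f1)`, and it is not conjugate to
`⟨e2 - 3e4, e1⟩` under the inner automorphism group of `aff₂(ℝ)`. -/
theorem s213_subalgebra_and_not_conjugate
    (e1 e2 e4 : Matrix (Fin 2) (Fin 2) ℝ) (f1 : Fin 2 → ℝ)
    (he1 : e1 = !![0, 0; 1, 0]) (he2 : e2 = !![1/2, 0; 0, -1/2])
    (he4 : e4 = !![1/2, 0; 0, 1/2]) (hf1 : f1 = ![1, 0]) :
    aff2Bracket (e2 - (3 : ℝ) • e4, 0) (e1, f1) = -(e1, f1) ∧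
    (∀ p ∈ Submodule.span ℝ ({(e2 - (3 : ℝ) • e4, 0), (e1, f1)} :
        Set (Matrix (Fin 2) (Fin 2) ℝ × (Fin 2 → ℝ))),
      ∀ q ∈ Submodule.span ℝ ({(e2 - (3 : ℝ) • e4, 0), (e1, f1)} :
        Set (Matrix (Fin 2) (Fin 2) ℝ × (Fin 2 → ℝ))),
        aff2Bracket p q ∈ Submodule.span ℝ ({(e2 - (3 : ℝ) • e4, 0), (e1, f1)} :
          Set (Matrix (Fin 2) (Fin 2) ℝ × (Fin 2 → ℝ)))) ∧
    Module.finrank ℝ (Submodule.span ℝ ({(e2 - (3 : ℝ) • e4, 0), (e1, f1)} :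
        Set (Matrix (Fin 2) (Fin 2) ℝ × (Fin 2 → ℝ)))) = 2 ∧
    ¬ ∃ (g : Matrix (Fin 2) (Fin 2) ℝ) (w : Fin 2 → ℝ), 0 < g.det ∧
        aff2Ad g w '' (Submodule.span ℝ ({(e2 - (3 : ℝ) • e4, 0), (e1, f1)} :
            Set (Matrix (Fin 2) (Fin 2) ℝ × (Fin 2 → ℝ))) : Set _) =
          (Submodule.span ℝ ({(e2 - (3 : ℝ) • e4, 0), (e1, (0 : Fin 2 → ℝ))} :
            Set (Matrix (Fin 2) (Fin 2) ℝ × (Fin 2 → ℝ))) : Set _) := by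
  subst he1 he2 he4 hf1
  have hA : !![1/2, 0; 0, -1/2] - (3 : ℝ) • !![1/2, 0; 0, 1/2] = !![(-1 : ℝ), 0; 0, -2] := by
    ext i j; fin_cases i <;> fin_cases j <;> norm_num
  rw [hA]
  refine ⟨aff2Bracket_s213_generators, fun p hp q hq => ?_, ?_, ?_⟩
  · refine aff2Bracket_mem_span_pair ?_ hp hq
    rw [aff2Bracket_s213_generators]
    exact neg_mem (Submodule.subset_span (by simp))
  · rw [← range_cons_cons_empty _ _ ![],
      finrank_span_eq_card linearIndependent_s213_generators, Fintype.card_fin]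
  · rintro ⟨g, w, hg, him⟩
    have hsnd : ∀ p ∈ Submodule.span ℝ ({(!![-1, 0; 0, -2], 0), (!![0, 0; 1, 0], ![1, 0])} :
        Set (Matrix (Fin 2) (Fin 2) ℝ × (Fin 2 → ℝ))), (aff2Ad g w p).2 = 0 := fun p hp =>
      Prod.snd_eq_zero_of_mem_span_pair (him ▸ Set.mem_image_of_mem (aff2Ad g w) hp)
    obtain h | h := aff2Ad_snd_ne_zero_or (A := !![-1, 0; 0, -2]) (B := !![0, 0; 1, 0])
      (v := ![1, 0]) hg.ne' (by norm_num [det_fin_two_of]) (by simp) w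
    exacts [h (hsnd _ (Submodule.subset_span (by simp))),
      h (hsnd _ (Submodule.subset_span (by simp)))]
end

section
/- Let h = ⟨e1, e2, e4⟩ be the three-dimensional subalgebra of gl_2(ℝ) (lower Borel plus center). Every 1-cocycle α: h → ℝ² (with ℝ² the natural gl_2(ℝ)-module) is a coboundary: there exists v ∈ ℝ² such that α(x) = x·v for all x ∈ h. Equivalently, the first Lie algebra cohomology H¹(h, ℝ²) vanishes. -/
open Matrix

/-- every 1-cocycle on `h = ⟨e1, e2, e4⟩ ⊆ gl₂(ℝ)` with values in the
natural module `ℝ²` is a coboundary: `∃ v, α x = x·v` for all `x ∈ h`. -/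
theorem h1_vanishes_for_borel
    (e1 e2 e4 : Matrix (Fin 2) (Fin 2) ℝ)
    (he1 : e1 = !![0, 0; 1, 0]) (he2 : e2 = !![1/2, 0; 0, -1/2])
    (he4 : e4 = !![1/2, 0; 0, 1/2])
    (α : Matrix (Fin 2) (Fin 2) ℝ →ₗ[ℝ] (Fin 2 → ℝ))
    (hcocycle : ∀ x ∈ Submodule.span ℝ ({e1, e2, e4} : Set (Matrix (Fin 2) (Fin 2) ℝ)),
      ∀ y ∈ Submodule.span ℝ ({e1, e2, e4} : Set (Matrix (Fin 2) (Fin 2) ℝ)),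
        α (x * y - y * x) = x.mulVec (α y) - y.mulVec (α x)) :
    ∃ v : Fin 2 → ℝ, ∀ x ∈ Submodule.span ℝ ({e1, e2, e4} : Set (Matrix (Fin 2) (Fin 2) ℝ)),
      α x = x.mulVec v := by
  have m4 : e4 ∈ Submodule.span ℝ ({e1, e2, e4} : Set (Matrix (Fin 2) (Fin 2) ℝ)) :=
    Submodule.subset_span (by simp)
  have he4' : e4 = (1/2 : ℝ) • (1 : Matrix (Fin 2) (Fin 2) ℝ) := by
    rw [he4]; ext i j; fin_cases i <;> fin_cases j <;> simp [Matrix.one_apply] <;> norm_num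
  have half : ∀ w : Fin 2 → ℝ, e4.mulVec w = (1/2 : ℝ) • w := by
    intro w; rw [he4', Matrix.smul_mulVec, Matrix.one_mulVec]
  have comm : ∀ x : Matrix (Fin 2) (Fin 2) ℝ, e4 * x - x * e4 = 0 := by
    intro x; rw [he4']; simp [smul_mul_assoc, mul_smul_comm]
  refine ⟨(2 : ℝ) • α e4, fun x hx => ?_⟩
  have h := hcocycle e4 m4 x hx
  rw [comm, map_zero, half] at h
  have h' : (1/2 : ℝ) • α x = x.mulVec (α e4) := sub_eq_zero.mp h.symm
  rw [Matrix.mulVec_smul, ← h', smul_smul]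
  norm_num
end
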